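/- arXiv:2012.06107 — 3 statements merged into one kernel-verified Lean document; each statement's English description precedes it below -/
import Mathlib

section
/- For every real ν, every x > 0 and every real t, the incomplete modified Bessel function satisfies (1/2) · ∫_t^∞ exp(-x·cosh(τ)) · cosh(ν·τ) dτ = (1/2) · ( S_ν(x, x·e^{-t}/2) + S_{-ν}(x, x·e^{-t}/2) ). -/
open Real MeasureTheory

/-- The Shu function `S_ν(x,t) = (1/2)(x/2)^ν ∫_0^t τ^{-(ν+1)} e^{-τ - x²/(4τ)} dτ`. -/
noncomputable def shu (ν x t : ℝ) : ℝ :=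
  (1/2) * (x/2) ^ ν * ∫ τ in (0:ℝ)..t, τ ^ (-(ν+1)) * Real.exp (-τ - x^2 / (4*τ))

/-!
The substitution `u = (x/2) e^{-τ}` maps `(t, ∞)` onto `(0, x e^{-t}/2)` and turns
`u + x²/(4u)` into `x cosh τ` and `(x/2)^ν u^{-ν}` into `e^{ντ}`, so
`S_{±ν}(x, x e^{-t}/2) = (1/2) ∫_t^∞ e^{-x cosh τ} e^{±ντ} dτ`; averaging the two signs gives
`cosh (ντ)`. Both integrals converge because `cosh τ ≥ τ²/4` dominates the integrands by Gaussians.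
-/

open Set

lemma sq_div_four_le_cosh (τ : ℝ) : τ ^ 2 / 4 ≤ cosh τ := by
  have hexp : 1 + |τ| + |τ| ^ 2 / 2 ≤ exp |τ| := quadratic_le_exp_of_nonneg (abs_nonneg τ)
  rw [← cosh_abs, cosh_eq, ← sq_abs τ]
  nlinarith [abs_nonneg τ, exp_pos (-|τ|)]

lemma integrable_exp_neg_mul_cosh_mul_exp {x : ℝ} (hx : 0 < x) (μ : ℝ) :
    Integrable (fun τ => exp (-x * cosh τ) * exp (μ * τ)) := by
  have hgauss : Integrable (fun τ => exp (μ ^ 2 / x) * exp (-(x / 4) * (τ - 2 * μ / x) ^ 2)) :=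
    ((integrable_exp_neg_mul_sq (by positivity)).comp_sub_right _).const_mul _
  refine hgauss.mono' (by fun_prop) (Filter.Eventually.of_forall fun τ => ?_)
  rw [norm_of_nonneg (by positivity), ← exp_add, ← exp_add, exp_le_exp]
  have hsq : μ ^ 2 / x + -(x / 4) * (τ - 2 * μ / x) ^ 2 = -(x / 4) * τ ^ 2 + μ * τ := by
    field_simp; ring
  nlinarith [sq_div_four_le_cosh τ]

lemma image_const_mul_exp_neg_Ioi {c : ℝ} (hc : 0 < c) (t : ℝ) :
    (fun τ => c * exp (-τ)) '' Ioi t = Ioo 0 (c * exp (-t)) := by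
  have hcomp : (fun τ => c * exp (-τ)) = (c * ·) ∘ exp ∘ Neg.neg := rfl
  rw [hcomp, image_comp, image_comp, image_neg_Ioi, image_exp_Iio, image_mul_left_Ioo hc,
    mul_zero]

lemma intervalIntegral_zero_const_mul_exp_neg {c : ℝ} (hc : 0 < c) (t : ℝ) (g : ℝ → ℝ) :
    ∫ u in (0:ℝ)..c * exp (-t), g u = ∫ τ in Ioi t, c * exp (-τ) * g (c * exp (-τ)) := by
  have hderiv : ∀ τ ∈ Ioi t,
      HasDerivWithinAt (fun τ => c * exp (-τ)) (-(c * exp (-τ))) (Ioi t) τ := fun τ _ => by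
    simpa using ((hasDerivAt_neg τ).exp.const_mul c).hasDerivWithinAt
  have hinj : InjOn (fun τ => c * exp (-τ)) (Ioi t) := fun a _ b _ h => by
    simpa [hc.ne'] using h
  rw [intervalIntegral.integral_of_le (by positivity), integral_Ioc_eq_integral_Ioo,
    ← image_const_mul_exp_neg_Ioi hc,
    integral_image_eq_integral_abs_deriv_smul measurableSet_Ioi hderiv hinj]
  simp only [abs_neg, abs_of_pos (show 0 < c * exp (-_) by positivity), smul_eq_mul]

lemma rpow_mul_shu_integrand_mul_exp_neg {x : ℝ} (hx : 0 < x) (ν τ : ℝ) :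
    (x / 2) ^ ν * (x / 2 * exp (-τ) * ((x / 2 * exp (-τ)) ^ (-(ν + 1)) *
      exp (-(x / 2 * exp (-τ)) - x ^ 2 / (4 * (x / 2 * exp (-τ)))))) =
      exp (-x * cosh τ) * exp (ν * τ) := by
  set u := x / 2 * exp (-τ) with hu
  have hu0 : 0 < u := by positivity
  have hpow : (x / 2) ^ ν * (u * u ^ (-(ν + 1))) = exp (ν * τ) := by
    rw [mul_comm u, ← rpow_add_one hu0.ne', show -(ν + 1) + 1 = -ν by ring, rpow_neg hu0.le,
      ← div_eq_mul_inv, ← div_rpow (by positivity) hu0.le, hu, exp_neg, mul_comm ν, exp_mul]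
    congr 1
    field_simp
  have hexp : -u - x ^ 2 / (4 * u) = -x * cosh τ := by
    rw [hu, cosh_eq, exp_neg]
    field_simp
    ring
  rw [hexp, ← hpow]
  ring

lemma shu_eq_integral_Ioi {x : ℝ} (hx : 0 < x) (ν t : ℝ) :
    shu ν x (x * exp (-t) / 2) = (1/2) * ∫ τ in Ioi t, exp (-x * cosh τ) * exp (ν * τ) := by
  rw [shu, show x * exp (-t) / 2 = x / 2 * exp (-t) by ring,
    intervalIntegral_zero_const_mul_exp_neg (by positivity), mul_assoc,
    ← integral_const_mul]
  simp_rw [rpow_mul_shu_integrand_mul_exp_neg hx]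

theorem stmt_3 (ν x t : ℝ) (hx : 0 < x) :
    (1/2) * ∫ τ in Set.Ioi t, Real.exp (-x * Real.cosh τ) * Real.cosh (ν * τ) =
      (1/2) * (shu ν x (x * Real.exp (-t) / 2) + shu (-ν) x (x * Real.exp (-t) / 2)) := by
  rw [shu_eq_integral_Ioi hx, shu_eq_integral_Ioi hx, ← mul_add,
    ← integral_add (integrable_exp_neg_mul_cosh_mul_exp hx ν).integrableOn
      (integrable_exp_neg_mul_cosh_mul_exp hx (-ν)).integrableOn]
  congr 1
  rw [← integral_const_mul]
  refine setIntegral_congr_fun measurableSet_Ioi fun τ _ => ?_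
  rw [cosh_eq (ν * τ), neg_mul ν τ]
  ring
end

section
/- For every real ν, every x > 0 and every t > 0, the Shu function satisfies the first differential relation -∂S_ν/∂x (x,t) - (ν/x)·S_ν(x,t) = S_{ν-1}(x,t) + ∂S_{ν-1}/∂t (x,t), where ∂S_ν/∂x denotes the partial derivative with respect to x and ∂S_{ν-1}/∂t the partial derivative with respect to t. -/
open Real MeasureTheory

/-!
Write `S_ν(x,t) = ½ (x/2)^ν I_{-ν-1}(x²/4, t)` with `I_μ(c,t) = ∫₀ᵗ τ^μ e^{-τ-c/τ} dτ`. For `c > 0`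
the kernel `τ^μ e^{-τ-c/τ}` tends to `0` at `0⁺`, so `I_μ` is a proper integral and
* `∂ₜ I_μ(c,t) = t^μ e^{-t-c/t}`;
* `∂_c I_μ = -I_{μ-1}`, by dominated differentiation, the kernel being decreasing in `c`;
* integrating the derivative of the kernel over `(0,t)`,
  `t^μ e^{-t-c/t} = μ I_{μ-1} - I_μ + c I_{μ-2}`.
With `μ = -ν` these turn both sides of the relation into the same combination of `I_{-ν-1}` and
`I_{-ν-2}`.
-/

open Set Filter Topology

theorem intervalIntegrable_of_continuousOn_Ioc_of_tendsto {E : Type*} [NormedAddCommGroup E]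
    {f : ℝ → E} {a b : ℝ} {l : E} (hab : a ≤ b) (hf : ContinuousOn f (Ioc a b))
    (ha : Tendsto f (𝓝[>] a) (𝓝 l)) : IntervalIntegrable f volume a b := by
  classical
  have hg : ContinuousOn (Function.update f a l) (Icc a b) := by
    rw [← Ioc_union_left hab, union_singleton]
    intro y hy
    rw [continuousWithinAt_insert]
    rcases hy with rfl | hy
    · exact continuousWithinAt_update_same.2 <| ha.mono_left <| nhdsWithin_mono _ <|
        sdiff_subset.trans Ioc_subset_Ioi_self
    · exact (hf y hy).congr (fun z hz => Function.update_of_ne hz.1.ne' ..)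
        (Function.update_of_ne hy.1.ne' ..)
  refine (hg.intervalIntegrable_of_Icc hab).congr_uIoo fun z hz => ?_
  rw [uIoo_of_le hab] at hz
  exact Function.update_of_ne hz.1.ne' ..

noncomputable def shuKernel (μ c τ : ℝ) : ℝ := τ ^ μ * exp (-τ - c / τ)

noncomputable def shuIntegral (μ c t : ℝ) : ℝ := ∫ τ in (0:ℝ)..t, shuKernel μ c τ

theorem continuousOn_shuKernel (μ c : ℝ) : ContinuousOn (shuKernel μ c) (Ioi 0) := by
  intro τ hτ
  have hτ₀ : τ ≠ 0 := ne_of_gt hτ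
  exact ((continuousAt_id.rpow_const (Or.inl hτ₀)).mul
    (by fun_prop (disch := assumption))).continuousWithinAt

theorem tendsto_shuKernel_nhdsGT_zero (μ : ℝ) {c : ℝ} (hc : 0 < c) :
    Tendsto (shuKernel μ c) (𝓝[>] 0) (𝓝 0) := by
  have h_inv : Tendsto (fun τ : ℝ => τ⁻¹ ^ (-μ) * exp (-c * τ⁻¹)) (𝓝[>] 0) (𝓝 0) :=
    (tendsto_rpow_mul_exp_neg_mul_atTop_nhds_zero (-μ) c hc).comp tendsto_inv_nhdsGT_zero
  have h_exp : Tendsto (fun τ : ℝ => exp (-τ)) (𝓝[>] 0) (𝓝 1) :=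
    ((by fun_prop : Continuous fun τ : ℝ => exp (-τ)).tendsto' 0 1 (by simp)).mono_left
      nhdsWithin_le_nhds
  refine (zero_mul (1:ℝ) ▸ h_inv.mul h_exp).congr' ?_
  filter_upwards [self_mem_nhdsWithin] with τ (hτ : 0 < τ)
  rw [shuKernel, inv_rpow hτ.le, rpow_neg hτ.le, inv_inv, mul_assoc, ← exp_add]
  ring_nf

theorem intervalIntegrable_shuKernel (μ : ℝ) {c t : ℝ} (hc : 0 < c) (ht : 0 ≤ t) :
    IntervalIntegrable (shuKernel μ c) volume 0 t :=
  intervalIntegrable_of_continuousOn_Ioc_of_tendsto ht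
    ((continuousOn_shuKernel μ c).mono Ioc_subset_Ioi_self) (tendsto_shuKernel_nhdsGT_zero μ hc)

theorem hasDerivAt_shuIntegral (μ : ℝ) {c t : ℝ} (hc : 0 < c) (ht : 0 < t) :
    HasDerivAt (shuIntegral μ c) (shuKernel μ c t) t :=
  intervalIntegral.integral_hasDerivAt_right (intervalIntegrable_shuKernel μ hc ht.le)
    ((continuousOn_shuKernel μ c).stronglyMeasurableAtFilter isOpen_Ioi t ht)
    ((continuousOn_shuKernel μ c).continuousAt (Ioi_mem_nhds ht))

theorem hasDerivAt_shuKernel (μ c : ℝ) {τ : ℝ} (hτ : 0 < τ) :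
    HasDerivAt (shuKernel μ c)
      (μ * shuKernel (μ - 1) c τ - shuKernel μ c τ + c * shuKernel (μ - 2) c τ) τ := by
  have h_pow : HasDerivAt (fun τ : ℝ => τ ^ μ) (μ * τ ^ (μ - 1)) τ :=
    hasDerivAt_rpow_const (Or.inl hτ.ne')
  have h_arg : HasDerivAt (fun τ : ℝ => -τ - c / τ) (-1 - (0 * τ - c * 1) / τ ^ 2) τ :=
    (hasDerivAt_id' τ).neg.sub ((hasDerivAt_const τ c).div (hasDerivAt_id' τ) hτ.ne')
  refine (h_pow.mul h_arg.exp).congr_deriv ?_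
  have h_sub1 : τ ^ (μ - 1) = τ ^ μ / τ := by rw [rpow_sub hτ, rpow_one]
  have h_sub2 : τ ^ (μ - 2) = τ ^ μ / τ ^ 2 := by rw [rpow_sub hτ, rpow_two]
  simp only [shuKernel, h_sub1, h_sub2]
  field_simp
  ring

theorem shuKernel_eq_shuIntegral (μ : ℝ) {c t : ℝ} (hc : 0 < c) (ht : 0 < t) :
    shuKernel μ c t =
      μ * shuIntegral (μ - 1) c t - shuIntegral μ c t + c * shuIntegral (μ - 2) c t := by
  have hint : ∀ μ', IntervalIntegrable (shuKernel μ' c) volume 0 t :=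
    fun μ' => intervalIntegrable_shuKernel μ' hc ht.le
  have h_ftc := intervalIntegral.integral_eq_sub_of_hasDerivAt_of_tendsto ht
    (fun τ hτ => hasDerivAt_shuKernel μ c hτ.1)
    ((((hint _).const_mul μ).sub (hint μ)).add ((hint _).const_mul c))
    (tendsto_shuKernel_nhdsGT_zero μ hc)
    (((continuousOn_shuKernel μ c).continuousAt (Ioi_mem_nhds ht)).tendsto.mono_left
      nhdsWithin_le_nhds)
  rw [intervalIntegral.integral_add (((hint _).const_mul μ).sub (hint μ))
      ((hint _).const_mul c),
    intervalIntegral.integral_sub ((hint _).const_mul μ) (hint μ),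
    intervalIntegral.integral_const_mul, intervalIntegral.integral_const_mul, sub_zero] at h_ftc
  exact h_ftc.symm

theorem hasDerivAt_shuKernel_param (μ c : ℝ) {τ : ℝ} (hτ : 0 < τ) :
    HasDerivAt (fun c => shuKernel μ c τ) (-shuKernel (μ - 1) c τ) c := by
  have h_arg : HasDerivAt (fun c : ℝ => -τ - c / τ) (-τ⁻¹) c := by
    simpa using ((hasDerivAt_id c).div_const τ).const_sub (-τ)
  refine (h_arg.exp.const_mul (τ ^ μ)).congr_deriv ?_
  rw [shuKernel, rpow_sub hτ, rpow_one]
  ring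

theorem shuKernel_le_of_param_le (μ : ℝ) {c c' τ : ℝ} (hτ : 0 < τ) (h : c ≤ c') :
    shuKernel μ c' τ ≤ shuKernel μ c τ := by
  unfold shuKernel
  gcongr

theorem hasDerivAt_shuIntegral_param (μ : ℝ) {c t : ℝ} (hc : 0 < c) (ht : 0 < t) :
    HasDerivAt (fun c => shuIntegral μ c t) (-shuIntegral (μ - 1) c t) c := by
  have h_ball : Metric.ball c (c / 2) ⊆ Ioi (c / 2) := fun c' hc' => by
    rw [Real.ball_eq_Ioo] at hc'; exact (by linarith [hc'.1] : c / 2 < c')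
  have h_int : ∀ c' ∈ Ioi (c / 2), ∀ μ', IntervalIntegrable (shuKernel μ' c') volume 0 t :=
    fun c' hc' μ' => intervalIntegrable_shuKernel μ' (lt_trans (half_pos hc) hc') ht.le
  have h_mem : ∀ τ ∈ uIoc 0 t, 0 < τ := fun τ hτ => (uIoc_of_le ht.le ▸ hτ).1
  have h_dom := intervalIntegral.hasDerivAt_integral_of_dominated_loc_of_deriv_le
    (F := fun c τ => shuKernel μ c τ) (F' := fun c τ => -shuKernel (μ - 1) c τ)
    (bound := shuKernel (μ - 1) (c / 2)) (Metric.ball_mem_nhds c (half_pos hc))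
    (eventually_of_mem (Ioi_mem_nhds (half_lt_self hc)) fun c' hc' =>
      (h_int c' hc' μ).def'.aestronglyMeasurable)
    (h_int c (half_lt_self hc) μ)
    (h_int c (half_lt_self hc) (μ - 1)).neg.def'.aestronglyMeasurable
    (ae_of_all _ fun τ hτ c' hc' => by
      rw [norm_neg, Real.norm_of_nonneg (by unfold shuKernel; positivity [(h_mem τ hτ).le])]
      exact shuKernel_le_of_param_le _ (h_mem τ hτ) (h_ball hc').le)
    (intervalIntegrable_shuKernel (μ - 1) (half_pos hc) ht.le)
    (ae_of_all _ fun τ hτ c' _ => hasDerivAt_shuKernel_param μ c' (h_mem τ hτ))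
  simpa only [shuIntegral, intervalIntegral.integral_neg] using h_dom.2

theorem shu_eq_shuIntegral (ν x t : ℝ) :
    shu ν x t = 1 / 2 * (x / 2) ^ ν * shuIntegral (-ν - 1) (x ^ 2 / 4) t := by
  simp only [shu, shuIntegral, shuKernel, div_div, neg_add']

theorem stmt_7 (ν x t : ℝ) (hx : 0 < x) (ht : 0 < t) :
    -deriv (fun y => shu ν y t) x - (ν/x) * shu ν x t =
      shu (ν-1) x t + deriv (fun s => shu (ν-1) x s) t := by
  have hc : 0 < x ^ 2 / 4 := by positivity
  have h_prefactor : HasDerivAt (fun y : ℝ => 1 / 2 * (y / 2) ^ ν)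
      (1 / 2 * (ν * (x / 2) ^ (ν - 1) * (1 / 2))) x :=
    ((hasDerivAt_rpow_const (Or.inl (by positivity))).comp x
      ((hasDerivAt_id x).div_const 2)).const_mul _
  have h_square : HasDerivAt (fun y : ℝ => y ^ 2 / 4) (x / 2) x :=
    ((hasDerivAt_pow 2 x).div_const 4).congr_deriv (by norm_num; ring)
  have h_integral : HasDerivAt (fun y => shuIntegral (-ν - 1) (y ^ 2 / 4) t)
      (-shuIntegral (-ν - 2) (x ^ 2 / 4) t * (x / 2)) x := by
    have := (hasDerivAt_shuIntegral_param (-ν - 1) hc ht).comp x h_square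
    rwa [show -ν - 1 - 1 = -ν - 2 by ring] at this
  have h_time := (hasDerivAt_shuIntegral (-ν) hc ht).const_mul (1 / 2 * (x / 2) ^ (ν - 1))
  simp only [shu_eq_shuIntegral, show -(ν - 1) - 1 = -ν by ring]
  rw [(h_prefactor.fun_mul h_integral).deriv, h_time.deriv, shuKernel_eq_shuIntegral (-ν) hc ht,
    rpow_sub_one (by positivity)]
  field_simp
  ring
end

section
/- For every real ν, every x > 0 and every t > 0, the Shu function admits the convergent series expansion S_ν(x,t) = K_ν(x) - Σ_{k=0}^∞ ( (-1)^k / (2·k!) ) · (x/2)^{ν+2k} · Γ(-ν-k, t), where K_ν(x) = (1/2)·(x/2)^ν · ∫_0^∞ τ^{-(ν+1)} · exp(-τ - x²/(4τ)) dτ is the Macdonald function and Γ(a, s) = ∫_s^∞ τ^{a-1}·e^{-τ} dτ is the upper incomplete gamma function. -/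
open Real MeasureTheory

/-- The Macdonald function `K_ν(x) = (1/2)(x/2)^ν ∫_0^∞ τ^{-(ν+1)} e^{-τ - x²/(4τ)} dτ`. -/
noncomputable def macdonald (ν x : ℝ) : ℝ :=
  (1/2) * (x/2) ^ ν * ∫ τ in Set.Ioi (0:ℝ), τ ^ (-(ν+1)) * Real.exp (-τ - x^2 / (4*τ))

/-- The upper incomplete gamma function `Γ(a,s) = ∫_s^∞ τ^{a-1} e^{-τ} dτ`. -/
noncomputable def uGamma (a s : ℝ) : ℝ :=
  ∫ τ in Set.Ioi s, τ ^ (a-1) * Real.exp (-τ)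

/-!
`K_ν(x) - S_ν(x,t)` is `(1/2)(x/2)^ν` times the integral over `(t, ∞)` of
`τ^{-(ν+1)} e^{-τ} · e^{-x²/(4τ)}`. Expanding the last factor in its exponential series and
integrating term by term gives the expansion: on `(t, ∞)` the exponent `x²/(4τ)` stays below
`x²/(4t)`, so the integrals of the absolute values of the terms are summable, being bounded by
a multiple of `(x²/(4t))^k / k!`. Splitting `K_ν` at `t` needs integrability at `0`, which
comes from `e^{-c/τ} ≤ n! τ^n / c^n` for large `n`.
-/

open Set

theorem hasSum_integral_mul_pow_div_factorial {α : Type*} [MeasurableSpace α] {μ : Measure α}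
    {f u : α → ℝ} {M : ℝ} (hf : Integrable f μ) (hu : AEStronglyMeasurable u μ)
    (hM : ∀ᵐ a ∂μ, ‖u a‖ ≤ M) :
    HasSum (fun k : ℕ => ∫ a, f a * (u a ^ k / k.factorial) ∂μ) (∫ a, f a * exp (u a) ∂μ) := by
  have hbound (k : ℕ) : ∀ᵐ a ∂μ, ‖u a ^ k / k.factorial‖ ≤ M ^ k / k.factorial := by
    filter_upwards [hM] with a ha
    rw [norm_div, norm_pow, Real.norm_natCast]
    gcongr
  have hint (k : ℕ) : Integrable (fun a => f a * (u a ^ k / k.factorial)) μ :=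
    hf.mul_bdd (by fun_prop) (hbound k)
  have hnorm (k : ℕ) :
      ∫ a, ‖f a * (u a ^ k / k.factorial)‖ ∂μ ≤ (∫ a, ‖f a‖ ∂μ) * (M ^ k / k.factorial) := by
    rw [← integral_mul_const]
    refine integral_mono_ae (hint k).norm (hf.norm.mul_const _) ?_
    filter_upwards [hbound k] with a ha
    rw [norm_mul]
    exact mul_le_mul_of_nonneg_left ha (norm_nonneg _)
  have hsum : Summable fun k : ℕ => ∫ a, ‖f a * (u a ^ k / k.factorial)‖ ∂μ :=
    .of_nonneg_of_le (fun k => integral_nonneg fun a => norm_nonneg _) hnorm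
      ((summable_pow_div_factorial M).mul_left _)
  have hexp (a : α) : ∑' k : ℕ, f a * (u a ^ k / k.factorial) = f a * exp (u a) := by
    rw [exp_eq_exp_ℝ, ((NormedSpace.expSeries_div_hasSum_exp (u a)).mul_left (f a)).tsum_eq]
  simpa only [hexp] using hasSum_integral_of_summable_integral_norm hint hsum

theorem integrableOn_Ioi_rpow_mul_exp_neg (a : ℝ) {t : ℝ} (ht : 0 < t) :
    IntegrableOn (fun τ : ℝ => τ ^ a * exp (-τ)) (Ioi t) :=
  integrable_of_isBigO_exp_neg one_half_pos
    ((continuousOn_id.rpow_const fun τ hτ => Or.inl (ht.trans_le hτ).ne').mul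
      continuousOn_id.neg.rexp)
    (by simpa only [mul_comm] using (Gamma_integrand_isLittleO a).isBigO)

theorem exp_neg_le_factorial_div_pow {y : ℝ} (hy : 0 < y) (n : ℕ) :
    exp (-y) ≤ n.factorial / y ^ n := by
  rw [exp_neg, ← inv_div]
  exact inv_anti₀ (by positivity) (pow_div_factorial_le_exp y hy.le n)

theorem integrableOn_Ioc_rpow_mul_exp_neg_div (a : ℝ) {c : ℝ} (hc : 0 < c) (t : ℝ) :
    IntegrableOn (fun τ : ℝ => τ ^ a * exp (-(c / τ))) (Ioc 0 t) := by
  obtain ⟨n, hn⟩ := exists_nat_gt (-a - 1)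
  have hdom : IntegrableOn (fun τ : ℝ => n.factorial / c ^ n * τ ^ (a + n)) (Ioc 0 t) :=
    ((intervalIntegrable_iff.1 (intervalIntegral.intervalIntegrable_rpow' (by linarith))).mono_set
      Ioc_subset_uIoc).const_mul _
  refine hdom.mono' (by fun_prop) ?_
  filter_upwards [ae_restrict_mem measurableSet_Ioc] with τ hτ
  have hτ0 : 0 < τ := hτ.1
  rw [norm_of_nonneg (by positivity), rpow_add hτ0, rpow_natCast]
  calc τ ^ a * exp (-(c / τ)) ≤ τ ^ a * (n.factorial / (c / τ) ^ n) :=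
        mul_le_mul_of_nonneg_left (exp_neg_le_factorial_div_pow (by positivity) n) (by positivity)
    _ = n.factorial / c ^ n * (τ ^ a * τ ^ n) := by
        rw [div_pow]
        field_simp

noncomputable def shuIntegrand (ν x τ : ℝ) : ℝ :=
  τ ^ (-(ν + 1)) * exp (-τ - x ^ 2 / (4 * τ))

theorem integrableOn_Ioc_shuIntegrand (ν : ℝ) {x : ℝ} (hx : x ≠ 0) (t : ℝ) :
    IntegrableOn (shuIntegrand ν x) (Ioc 0 t) := by
  refine (integrableOn_Ioc_rpow_mul_exp_neg_div (-(ν + 1)) (by positivity : 0 < x ^ 2 / 4)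
    t).mono' (by unfold shuIntegrand; fun_prop) ?_
  filter_upwards [ae_restrict_mem measurableSet_Ioc] with τ hτ
  have hτ0 : 0 < τ := hτ.1
  rw [shuIntegrand, norm_of_nonneg (by positivity), div_div]
  gcongr
  linarith

theorem integrableOn_Ioi_shuIntegrand (ν x : ℝ) {t : ℝ} (ht : 0 < t) :
    IntegrableOn (shuIntegrand ν x) (Ioi t) := by
  refine (integrableOn_Ioi_rpow_mul_exp_neg (-(ν + 1)) ht).mono'
    (by unfold shuIntegrand; fun_prop) ?_
  filter_upwards [ae_restrict_mem measurableSet_Ioi] with τ hτ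
  have hτ0 : 0 < τ := ht.trans hτ
  rw [shuIntegrand, norm_of_nonneg (by positivity)]
  gcongr
  linarith [show 0 ≤ x ^ 2 / (4 * τ) by positivity]

theorem macdonald_sub_shu (ν : ℝ) {x t : ℝ} (hx : x ≠ 0) (ht : 0 < t) :
    macdonald ν x - shu ν x t = 1 / 2 * (x / 2) ^ ν * ∫ τ in Ioi t, shuIntegrand ν x τ := by
  have hsplit : ∫ τ in Ioi 0, shuIntegrand ν x τ =
      (∫ τ in Ioc 0 t, shuIntegrand ν x τ) + ∫ τ in Ioi t, shuIntegrand ν x τ := by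
    rw [← Ioc_union_Ioi_eq_Ioi ht.le]
    exact setIntegral_union (Ioc_disjoint_Ioi le_rfl) measurableSet_Ioi
      (integrableOn_Ioc_shuIntegrand ν hx t) (integrableOn_Ioi_shuIntegrand ν x ht)
  rw [macdonald, shu, intervalIntegral.integral_of_le ht.le]
  simp only [shuIntegrand] at hsplit ⊢
  rw [hsplit]
  ring

theorem hasSum_integral_Ioi_shuIntegrand (ν x : ℝ) {t : ℝ} (ht : 0 < t) :
    HasSum (fun k : ℕ => (-1) ^ k * ((x / 2) ^ 2) ^ k / k.factorial * uGamma (-ν - k) t)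
      (∫ τ in Ioi t, shuIntegrand ν x τ) := by
  have hbound : ∀ᵐ τ ∂volume.restrict (Ioi t), ‖-(x ^ 2 / (4 * τ))‖ ≤ x ^ 2 / (4 * t) := by
    filter_upwards [ae_restrict_mem measurableSet_Ioi] with τ hτ
    have hτ0 : 0 < τ := ht.trans hτ
    rw [norm_neg, norm_of_nonneg (by positivity)]
    gcongr
    exact hτ.le
  convert hasSum_integral_mul_pow_div_factorial (integrableOn_Ioi_rpow_mul_exp_neg (-(ν + 1)) ht)
    (by fun_prop : Measurable fun τ : ℝ => -(x ^ 2 / (4 * τ))).aestronglyMeasurable hbound using 1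
  · ext k
    rw [uGamma, ← integral_const_mul]
    refine setIntegral_congr_fun measurableSet_Ioi fun τ hτ => ?_
    have hτ0 : 0 < τ := ht.trans hτ
    rw [show -ν - (k : ℝ) - 1 = -(ν + 1) - k by ring, rpow_sub hτ0, rpow_natCast,
      show -(x ^ 2 / (4 * τ)) = -1 * (x / 2) ^ 2 / τ by ring,
      div_pow (-1 * (x / 2) ^ 2) τ k, mul_pow]
    ring
  · refine setIntegral_congr_fun measurableSet_Ioi fun τ _ => ?_
    rw [shuIntegrand, sub_eq_add_neg, exp_add]
    ring

theorem stmt_13 (ν x t : ℝ) (hx : 0 < x) (ht : 0 < t) :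
    HasSum (fun k : ℕ => ((-1)^k / (2 * (k.factorial : ℝ))) *
        (x/2) ^ (ν + 2*(k:ℝ)) * uGamma (-ν - (k:ℝ)) t)
      (macdonald ν x - shu ν x t) := by
  rw [macdonald_sub_shu ν hx.ne' ht]
  refine ((hasSum_integral_Ioi_shuIntegrand ν x ht).mul_left (1 / 2 * (x / 2) ^ ν)).congr_fun
    fun k => ?_
  rw [show ν + 2 * (k : ℝ) = ν + (2 * k : ℕ) by push_cast; ring,
    rpow_add_natCast (by positivity) ν, pow_mul]
  ring
end
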